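/- The path graph Z_n on n vertices is graceful for every n ≥ 2: the labelling that assigns to the k-th vertex along the path the value k/2 if k is even and n - (k+1)/2 if k is odd (for k = 0,...,n-1) is a graceful labelling. -/

import Mathlib

/-!
Going along the path, the labels alternate between the bottom `0, 1, 2, …` and the top
`n - 1, n - 2, …` of `{0, …, n - 1}`, so consecutive labels close in on each other and the
`k`-th edge receives the label `n - 1 - k`. Hence the edge labels are exactly `n - 1, …, 1`.
-/

/-- `|f k - f (k + 1)|`, written without truncated subtraction. -/
def edgeLabel (f : ℕ → ℕ) (k : ℕ) : ℕ := max (f k) (f (k + 1)) - min (f k) (f (k + 1))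

def zigzag (n k : ℕ) : ℕ := if k % 2 = 0 then k / 2 else n - (k + 1) / 2

section EdgeLabels

variable {f : ℕ → ℕ} {n : ℕ}

theorem edgeLabel_injOn_of_eq_sub (hf : ∀ k < n - 1, edgeLabel f k = n - 1 - k) :
    Set.InjOn (edgeLabel f) (Finset.range (n - 1)) := by
  intro a ha b hb hab
  simp only [Finset.coe_range, Set.mem_Iio] at ha hb
  rw [hf a ha, hf b hb] at hab
  omega

theorem image_edgeLabel_of_eq_sub (hf : ∀ k < n - 1, edgeLabel f k = n - 1 - k) :
    (Finset.range (n - 1)).image (edgeLabel f) = Finset.Icc 1 (n - 1) := by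
  ext x
  simp only [Finset.mem_image, Finset.mem_range, Finset.mem_Icc]
  constructor
  · rintro ⟨k, hk, rfl⟩
    rw [hf k hk]
    omega
  · rintro ⟨hx_pos, hx_le⟩
    exact ⟨n - 1 - x, by omega, by rw [hf _ (by omega)]; omega⟩

end EdgeLabels

section Zigzag

variable {n : ℕ}

theorem zigzag_le_sub_one {k : ℕ} (hk : k < n) : zigzag n k ≤ n - 1 := by
  unfold zigzag
  split_ifs <;> omega

theorem zigzag_injOn : Set.InjOn (zigzag n) (Set.Iio n) := by
  intro a ha b hb hab
  simp only [Set.mem_Iio] at ha hb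
  unfold zigzag at hab
  split_ifs at hab <;> omega

theorem edgeLabel_zigzag {k : ℕ} (hk : k < n - 1) : edgeLabel (zigzag n) k = n - 1 - k := by
  unfold edgeLabel zigzag
  split_ifs <;> omega

end Zigzag

theorem stmt11_general (n : ℕ)
    (g : ℕ → ℕ) (hg : ∀ k, g k = if k % 2 = 0 then k / 2 else n - (k + 1) / 2) :
    (∀ k < n, g k ≤ n - 1) ∧
    Set.InjOn g (Set.Iio n) ∧
    Set.InjOn (fun k => max (g k) (g (k + 1)) - min (g k) (g (k + 1)))
      (Finset.range (n - 1)) ∧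
    (Finset.range (n - 1)).image
        (fun k => max (g k) (g (k + 1)) - min (g k) (g (k + 1)))
      = Finset.Icc 1 (n - 1) := by
  obtain rfl : g = zigzag n := funext hg
  have h_edge : ∀ k < n - 1, edgeLabel (zigzag n) k = n - 1 - k := fun _ => edgeLabel_zigzag
  exact ⟨fun _ => zigzag_le_sub_one, zigzag_injOn, edgeLabel_injOn_of_eq_sub h_edge,
    image_edgeLabel_of_eq_sub h_edge⟩

/-- The path on `n ≥ 2` vertices is graceful: the labelling
`k ↦ k/2` for even `k` and `k ↦ n - (k+1)/2` for odd `k` is a graceful labelling. -/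
theorem stmt11 (n : ℕ) (hn : 2 ≤ n)
    (g : ℕ → ℕ) (hg : ∀ k, g k = if k % 2 = 0 then k / 2 else n - (k + 1) / 2) :
    (∀ k < n, g k ≤ n - 1) ∧
    Set.InjOn g (Set.Iio n) ∧
    Set.InjOn (fun k => max (g k) (g (k + 1)) - min (g k) (g (k + 1)))
      (Finset.range (n - 1)) ∧
    (Finset.range (n - 1)).image
        (fun k => max (g k) (g (k + 1)) - min (g k) (g (k + 1)))
      = Finset.Icc 1 (n - 1) :=
  stmt11_general n g hg
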